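/- There exists a family of random variables (Z_n) (namely Z_n = 1 + n·(T∧τ¹ − T∧τ^{1+1/n}) from the state-dependent switching counterexample, with τ-times given by minima of independent exponentials) such that (Z_n) is not Cauchy in L¹; hence the difference quotients of the state-dependent switching solution do not converge in L¹. -/

import Mathlib

open MeasureTheory ProbabilityTheory Real Filter Set

/-!
On the event `{Y0 m > T, Y1 m ≤ T/2}`, whose probability is `e^{-T}(1 - e^{-T/(2m)}) ≍ T/m`,
the increment `Z m - 1` is at least `mT/2`, while `Z k - 1 ≤ kT` always. Hence for fixed `k`,
`E|Z m - Z k| ≥ (mT/2 - kT) P(event) ≥ T² e^{-2T}/4 - kT²/(2m)`, which stays bounded away from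
`0` as `m → ∞`.
-/

section ExponentialLaw

variable {Ω : Type*} [MeasurableSpace Ω] {μ : Measure Ω} {Y : Ω → ℝ} {r : ℝ}

lemma ae_nonneg_of_map_eq_expMeasure (hY : Measurable Y) (hlaw : μ.map Y = expMeasure r) :
    ∀ᵐ ω ∂μ, 0 ≤ Y ω := by
  have h : ∀ᵐ y ∂(expMeasure r), 0 ≤ y := by
    rw [expMeasure, gammaMeasure, ae_withDensity_iff (by unfold gammaPDF; fun_prop)]
    exact ae_of_all _ fun y hy => not_lt.mp fun hneg => hy (gammaPDF_of_neg hneg)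
  rw [← hlaw] at h
  exact ae_of_ae_map hY.aemeasurable h

lemma measureReal_Iic_expMeasure (hr : 0 < r) {x : ℝ} (hx : 0 ≤ x) :
    (expMeasure r).real (Iic x) = 1 - exp (-(r * x)) := by
  have := isProbabilityMeasure_expMeasure hr
  rw [← cdf_eq_real, cdf_expMeasure_eq hr, if_pos hx]

lemma measureReal_Ioi_expMeasure (hr : 0 < r) {x : ℝ} (hx : 0 ≤ x) :
    (expMeasure r).real (Ioi x) = exp (-(r * x)) := by
  have := isProbabilityMeasure_expMeasure hr
  rw [← compl_Iic, probReal_compl_eq_one_sub measurableSet_Iic, measureReal_Iic_expMeasure hr hx]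
  ring

lemma measureReal_preimage_Ioi_inter_preimage_Iic {X0 X1 : Ω → ℝ} {r0 r1 x y : ℝ}
    (hr0 : 0 < r0) (hr1 : 0 < r1) (hx : 0 ≤ x) (hy : 0 ≤ y)
    (hX0 : Measurable X0) (hX1 : Measurable X1) (hX0law : μ.map X0 = expMeasure r0)
    (hX1law : μ.map X1 = expMeasure r1) (hind : IndepFun X0 X1 μ) :
    μ.real (X0 ⁻¹' Ioi x ∩ X1 ⁻¹' Iic y) = exp (-(r0 * x)) * (1 - exp (-(r1 * y))) := by
  rw [measureReal_def, hind.measure_inter_preimage_eq_mul _ _ measurableSet_Ioi measurableSet_Iic,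
    ENNReal.toReal_mul, ← measureReal_def, ← measureReal_def,
    ← map_measureReal_apply hX0 measurableSet_Ioi, ← map_measureReal_apply hX1 measurableSet_Iic,
    hX0law, hX1law, measureReal_Ioi_expMeasure hr0 hx, measureReal_Iic_expMeasure hr1 hy]

end ExponentialLaw

lemma mul_exp_neg_le_one_sub_exp_neg (x : ℝ) : x * exp (-x) ≤ 1 - exp (-x) := by
  have h := mul_le_mul_of_nonneg_right (add_one_le_exp x) (exp_nonneg (-x))
  rw [← exp_add, add_neg_cancel, exp_zero] at h
  linarith

/-- `T∧τ¹ − T∧τ^{1+1/n}` with `τ¹ = y0` and `τ^{1+1/n} = y0 ∧ y1`. -/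
def cappedGap (T y0 y1 : ℝ) : ℝ := min T y0 - min T (min y0 y1)

section CappedGap

variable {T y0 y1 : ℝ}

lemma cappedGap_nonneg : 0 ≤ cappedGap T y0 y1 :=
  sub_nonneg.mpr (min_le_min_left T (min_le_left y0 y1))

lemma cappedGap_le (hT : 0 ≤ T) (h0 : 0 ≤ y0) (h1 : 0 ≤ y1) : cappedGap T y0 y1 ≤ T := by
  rw [cappedGap]
  linarith [min_le_left T y0, le_min hT (le_min h0 h1)]

lemma half_le_cappedGap (h0 : T ≤ y0) (h1 : y1 ≤ T / 2) : T / 2 ≤ cappedGap T y0 y1 := by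
  rw [cappedGap, min_eq_left h0]
  linarith [min_le_right T (min y0 y1), min_le_right y0 y1]

end CappedGap

section RandomCappedGap

variable {Ω : Type*} [MeasureSpace Ω] [IsProbabilityMeasure (ℙ : Measure Ω)] {T : ℝ}
  {X0 X1 Y0 Y1 : Ω → ℝ}

lemma integrable_cappedGap (hT : 0 ≤ T) (hY0 : Measurable Y0) (hY1 : Measurable Y1)
    (hY0_nonneg : ∀ᵐ ω ∂ℙ, 0 ≤ Y0 ω) (hY1_nonneg : ∀ᵐ ω ∂ℙ, 0 ≤ Y1 ω) :
    Integrable (fun ω => cappedGap T (Y0 ω) (Y1 ω)) ℙ := by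
  refine .of_bound (by unfold cappedGap; fun_prop) T ?_
  filter_upwards [hY0_nonneg, hY1_nonneg] with ω h0 h1
  rw [norm_of_nonneg cappedGap_nonneg]
  exact cappedGap_le hT h0 h1

lemma measureReal_mul_le_integral_abs_sub {a b : ℝ} (ha : 0 ≤ a) (hb : 0 ≤ b) (hT : 0 ≤ T)
    (hX0 : Measurable X0) (hX1 : Measurable X1)
    (hX : Integrable (fun ω => cappedGap T (X0 ω) (X1 ω)) ℙ)
    (hY : Integrable (fun ω => cappedGap T (Y0 ω) (Y1 ω)) ℙ)
    (hY0_nonneg : ∀ᵐ ω ∂ℙ, 0 ≤ Y0 ω) (hY1_nonneg : ∀ᵐ ω ∂ℙ, 0 ≤ Y1 ω) :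
    (ℙ : Measure Ω).real (X0 ⁻¹' Ioi T ∩ X1 ⁻¹' Iic (T / 2)) * (a * (T / 2) - b * T) ≤
      ∫ ω, |a * cappedGap T (X0 ω) (X1 ω) - b * cappedGap T (Y0 ω) (Y1 ω)| ∂ℙ := by
  set E := X0 ⁻¹' Ioi T ∩ X1 ⁻¹' Iic (T / 2)
  have hE : MeasurableSet E := hX0 measurableSet_Ioi |>.inter (hX1 measurableSet_Iic)
  rw [← smul_eq_mul, ← integral_indicator_const _ hE]
  refine integral_mono_ae ((integrable_const _).indicator hE)
    ((hX.const_mul a).sub (hY.const_mul b)).abs ?_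
  filter_upwards [hY0_nonneg, hY1_nonneg] with ω h0 h1
  by_cases hω : ω ∈ E
  · rw [indicator_of_mem hω]
    have hXgap := half_le_cappedGap (le_of_lt hω.1) hω.2
    have hYgap := cappedGap_le hT h0 h1
    refine le_trans ?_ (le_abs_self _)
    nlinarith
  · rw [indicator_of_notMem hω]
    exact abs_nonneg _

lemma integral_abs_sub_cappedGap_ge (hT : 0 < T) {m k : ℕ} (hm : 1 ≤ m) {s0 s1 : ℝ}
    (hX0 : Measurable X0) (hX1 : Measurable X1) (hY0 : Measurable Y0) (hY1 : Measurable Y1)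
    (hX0law : (ℙ : Measure Ω).map X0 = expMeasure 1)
    (hX1law : (ℙ : Measure Ω).map X1 = expMeasure (1 / m))
    (hY0law : (ℙ : Measure Ω).map Y0 = expMeasure s0)
    (hY1law : (ℙ : Measure Ω).map Y1 = expMeasure s1) (hind : IndepFun X0 X1 ℙ) :
    T ^ 2 / 4 * exp (-(2 * T)) - k * T ^ 2 / 2 / m ≤
      ∫ ω, |m * cappedGap T (X0 ω) (X1 ω) - k * cappedGap T (Y0 ω) (Y1 ω)| ∂ℙ := by
  have hm0 : (0 : ℝ) < m := by exact_mod_cast hm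
  set x : ℝ := 1 / m * (T / 2) with hx
  have hx0 : 0 ≤ x := by positivity
  have hxT : x ≤ T := by
    rw [hx, div_mul_eq_mul_div, one_mul, div_le_iff₀ hm0]
    nlinarith [(Nat.one_le_cast.mpr hm : (1 : ℝ) ≤ m)]
  have hP := measureReal_preimage_Ioi_inter_preimage_Iic one_pos (by positivity) hT.le
    (by positivity : 0 ≤ T / 2) hX0 hX1 hX0law hX1law hind
  rw [one_mul] at hP
  set p := (ℙ : Measure Ω).real (X0 ⁻¹' Ioi T ∩ X1 ⁻¹' Iic (T / 2))
  have hp_le : p ≤ x := by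
    rw [hP]
    nlinarith [one_sub_le_exp_neg x, exp_le_one_iff.mpr (neg_nonpos.mpr hT.le), exp_pos (-x),
      exp_pos (-T)]
  have hp_ge : exp (-(2 * T)) * x ≤ p := calc
    exp (-(2 * T)) * x = exp (-T) * (x * exp (-T)) := by
      rw [show -(2 * T) = -T + -T by ring, exp_add]; ring
    _ ≤ exp (-T) * (x * exp (-x)) := by gcongr
    _ ≤ exp (-T) * (1 - exp (-x)) := by gcongr; exact mul_exp_neg_le_one_sub_exp_neg x
    _ = p := hP.symm
  have hX0_nonneg := ae_nonneg_of_map_eq_expMeasure hX0 hX0law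
  have hX1_nonneg := ae_nonneg_of_map_eq_expMeasure hX1 hX1law
  have hY0_nonneg := ae_nonneg_of_map_eq_expMeasure hY0 hY0law
  have hY1_nonneg := ae_nonneg_of_map_eq_expMeasure hY1 hY1law
  calc T ^ 2 / 4 * exp (-(2 * T)) - k * T ^ 2 / 2 / m
      = m * (T / 2) * (exp (-(2 * T)) * x) - k * T * x := by rw [hx]; field_simp; ring
    _ ≤ m * (T / 2) * p - k * T * p := by gcongr
    _ = p * (m * (T / 2) - k * T) := by ring
    _ ≤ _ := measureReal_mul_le_integral_abs_sub hm0.le k.cast_nonneg hT.le hX0 hX1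
        (integrable_cappedGap hT.le hX0 hX1 hX0_nonneg hX1_nonneg)
        (integrable_cappedGap hT.le hY0 hY1 hY0_nonneg hY1_nonneg) hY0_nonneg hY1_nonneg

end RandomCappedGap

theorem stmt2_general {Ω : Type*} [MeasureSpace Ω] [IsProbabilityMeasure (ℙ : Measure Ω)]
    (T : ℝ) (hT : 0 < T)
    (Y0 Y1 Y2 : ℕ → Ω → ℝ)
    (hm0 : ∀ n, Measurable (Y0 n)) (hm1 : ∀ n, Measurable (Y1 n))
    (law0 : ∀ n : ℕ, 1 ≤ n → Measure.map (Y0 n) ℙ = expMeasure 1)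
    (law1 : ∀ n : ℕ, 1 ≤ n → Measure.map (Y1 n) ℙ = expMeasure (1 / (n : ℝ)))
    (hind : ∀ n : ℕ, 1 ≤ n →
      iIndepFun
        ![Y0 n, Y1 n, Y2 n] ℙ)
    (Z : ℕ → Ω → ℝ)
    (hZ : ∀ (n : ℕ) ω, Z n ω =
      1 + (n : ℝ) * (min T (Y0 n ω) - min T (min (Y0 n ω) (Y1 n ω)))) :
    ¬ (∀ ε : ℝ, 0 < ε → ∃ N : ℕ, ∀ m ≥ N, ∀ k ≥ N,
        ∫ ω, |Z m ω - Z k ω| ∂ℙ < ε) := by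
  intro hCauchy
  set δ : ℝ := T ^ 2 / 4 * exp (-(2 * T))
  have hδ : 0 < δ := by positivity
  obtain ⟨N, hN⟩ := hCauchy (δ / 2) (by positivity)
  set k := max N 1
  have hk : 1 ≤ k := le_max_right N 1
  have hZ_sub (m : ℕ) (ω : Ω) : Z m ω - Z k ω =
      m * cappedGap T (Y0 m ω) (Y1 m ω) - k * cappedGap T (Y0 k ω) (Y1 k ω) := by
    rw [hZ, hZ, cappedGap, cappedGap]
    ring
  have hbound (m : ℕ) (hm : 1 ≤ m) : δ - k * T ^ 2 / 2 / m ≤ ∫ ω, |Z m ω - Z k ω| ∂ℙ := by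
    have hindep : IndepFun (Y0 m) (Y1 m) ℙ := by
      simpa using (hind m hm).indepFun (i := 0) (j := 1) (by decide)
    simpa only [hZ_sub] using integral_abs_sub_cappedGap_ge hT hm (hm0 m) (hm1 m) (hm0 k)
      (hm1 k) (law0 m hm) (law1 m hm) (law0 k hk) (law1 k hk) hindep
  have hlim : Tendsto (fun m : ℕ => δ - k * T ^ 2 / 2 / m) atTop (nhds δ) := by
    simpa using (tendsto_const_nhds (x := δ)).sub
      (tendsto_const_div_atTop_nhds_zero_nat (k * T ^ 2 / 2))
  obtain ⟨m, hmN, hm, hδm⟩ := ((eventually_ge_atTop N).and ((eventually_ge_atTop 1).and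
    (hlim.eventually (lt_mem_nhds (half_lt_self hδ))))).exists
  exact (hN m hmN k (le_max_left N 1)).not_ge (hδm.le.trans (hbound m hm))

/-- The family `Z n = 1 + n (T∧τ¹ − T∧τ^{1+1/n})`, where `τ¹ = Y0 n` and
`τ^{1+1/n} = Y0 n ∧ Y1 n` for independent exponential random variables `Y0 n, Y1 n, Y2 n`
with rates `1, 1/n, 1/n`, is not Cauchy in `L¹`; hence the difference quotients of the
state-dependent switching solution do not converge in `L¹`. -/
theorem stmt2 {Ω : Type*} [MeasureSpace Ω] [IsProbabilityMeasure (ℙ : Measure Ω)]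
    (T : ℝ) (hT : 0 < T)
    (Y0 Y1 Y2 : ℕ → Ω → ℝ)
    (hm0 : ∀ n, Measurable (Y0 n)) (hm1 : ∀ n, Measurable (Y1 n))
    (hm2 : ∀ n, Measurable (Y2 n))
    (law0 : ∀ n : ℕ, 1 ≤ n → Measure.map (Y0 n) ℙ = expMeasure 1)
    (law1 : ∀ n : ℕ, 1 ≤ n → Measure.map (Y1 n) ℙ = expMeasure (1 / (n : ℝ)))
    (law2 : ∀ n : ℕ, 1 ≤ n → Measure.map (Y2 n) ℙ = expMeasure (1 / (n : ℝ)))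
    (hind : ∀ n : ℕ, 1 ≤ n →
      iIndepFun
        ![Y0 n, Y1 n, Y2 n] ℙ)
    (Z : ℕ → Ω → ℝ)
    (hZ : ∀ (n : ℕ) ω, Z n ω =
      1 + (n : ℝ) * (min T (Y0 n ω) - min T (min (Y0 n ω) (Y1 n ω)))) :
    ¬ (∀ ε : ℝ, 0 < ε → ∃ N : ℕ, ∀ m ≥ N, ∀ k ≥ N,
        ∫ ω, |Z m ω - Z k ω| ∂ℙ < ε) :=
  stmt2_general T hT Y0 Y1 Y2 hm0 hm1 law0 law1 hind Z hZ
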